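/- Let c : 2^J → ℝ≥0 be monotone and subadditive with c(∅)=0, let |J| = n, m ≥ 2, and k = m + ⌈√(mn)⌉. Let OPT = min over m-partitions (X₁,…,X_m) of J of max_i (c(Xᵢ)+p(Xᵢ)), and let (X₁,…,X_k) be a k-partition of J minimizing max_{i∈[k]} c(Xᵢ) subject to |Xᵢ| ≤ ⌈√(n/m)⌉ for all i. Then max_{i∈[k]} c(Xᵢ) ≤ OPT. -/

import Mathlib

/-!
Refine an arbitrary `m`-partition `X*` of `J` by cutting each part `X*ᵢ` into
`⌊|X*ᵢ|/s⌋ + 1` chunks of size at most `s = ⌈√(n/m)⌉`. Since `n ≤ s · ⌈√(mn)⌉`, there are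
at most `m + ⌈√(mn)⌉ = k` chunks, so after padding with empty parts this is a feasible
`k`-partition. Each chunk lies in some `X*ᵢ`, so by monotonicity its cost is at most
`c(X*ᵢ) ≤ c(X*ᵢ) + p(X*ᵢ)`, and the minimality of `X` finishes the proof.
-/

open Finset Function

section Disjointness

variable {β : Type*} [PartialOrder β] [OrderBot β]

theorem pairwise_disjoint_fin_cons {t : ℕ} {a : β} {f : Fin t → β}
    (ha : ∀ q, Disjoint a (f q)) (hf : Pairwise (Disjoint on f)) :
    Pairwise (Disjoint on (Fin.cons a f : Fin (t + 1) → β)) := by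
  intro i j hij
  cases i using Fin.cases <;> cases j using Fin.cases <;>
    simp only [onFun, Fin.cons_zero, Fin.cons_succ]
  · exact absurd rfl hij
  · exact ha _
  · exact (ha _).symm
  · exact hf fun h => hij (congrArg Fin.succ h)

theorem pairwise_disjoint_sigma {ι : Type*} {τ : ι → Type*} {Y : ι → β} {f : ∀ i, τ i → β}
    (hY : Pairwise (Disjoint on Y)) (hf : ∀ i, Pairwise (Disjoint on f i))
    (hfY : ∀ i q, f i q ≤ Y i) :
    Pairwise (Disjoint on fun x : Σ i, τ i => f x.1 x.2) := by
  rintro ⟨i, q⟩ ⟨j, r⟩ hne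
  by_cases hij : i = j
  · subst hij
    exact hf i fun hqr => hne (congrArg (Sigma.mk i) hqr)
  · exact (hY hij).mono (hfY i q) (hfY j r)

theorem forall_extend_bot {σ κ : Type*} {P : β → Prop} (e : σ → κ) (G : σ → β)
    (hbot : P ⊥) (hG : ∀ a, P (G a)) (j : κ) : P (extend e G ⊥ j) := by
  classical
  rw [extend_def]
  split_ifs
  exacts [hG _, hbot]

theorem pairwise_disjoint_extend_bot {σ κ : Type*} {e : σ → κ} (he : Injective e) {G : σ → β}
    (hG : Pairwise (Disjoint on G)) : Pairwise (Disjoint on extend e G ⊥) := by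
  intro j j' hne
  simp only [onFun]
  rcases em (∃ a, e a = j) with ⟨a, rfl⟩ | h
  · rcases em (∃ b, e b = j') with ⟨b, rfl⟩ | h'
    · rw [he.extend_apply, he.extend_apply]
      exact hG fun hab => hne (congrArg e hab)
    · rw [extend_apply' _ _ _ h']
      exact disjoint_bot_right
  · rw [extend_apply' _ _ _ h]
    exact disjoint_bot_left

end Disjointness

theorem Finset.sup_extend_bot {σ κ β : Type*} [Fintype σ] [Fintype κ] [SemilatticeSup β]
    [OrderBot β] {e : σ → κ} (he : Injective e) (G : σ → β) :
    univ.sup (extend e G ⊥) = univ.sup G :=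
  le_antisymm
    (Finset.sup_le fun j _ => forall_extend_bot (P := (· ≤ univ.sup G)) e G bot_le
      (fun a => le_sup (mem_univ a)) j)
    (Finset.sup_le fun a _ => (he.extend_apply G ⊥ a).ge.trans (le_sup (mem_univ (e a))))

theorem Finset.sum_nat_div_le {ι : Type*} (u : Finset ι) (f : ι → ℕ) (d : ℕ) :
    ∑ i ∈ u, f i / d ≤ (∑ i ∈ u, f i) / d := by
  rcases d.eq_zero_or_pos with rfl | hd
  · simp
  rw [Nat.le_div_iff_mul_le hd, sum_mul]
  exact sum_le_sum fun i _ => Nat.div_mul_le_self _ _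

theorem le_ceil_sqrt_div_mul_ceil_sqrt_mul (n m : ℕ) (hm : m ≠ 0) :
    n ≤ ⌈√((n : ℝ) / m)⌉₊ * ⌈√((m : ℝ) * n)⌉₊ := by
  have hsqrt : √((n : ℝ) / m) * √((m : ℝ) * n) = n := by
    have hmn : (n : ℝ) / m * (m * n) = n * n := by field_simp
    rw [← Real.sqrt_mul (by positivity), hmn, Real.sqrt_mul_self (by positivity)]
  exact_mod_cast hsqrt ▸ mul_le_mul (Nat.le_ceil _) (Nat.le_ceil _) (Real.sqrt_nonneg _)
    (Nat.cast_nonneg _)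

section Refinement

variable {α : Type*} [DecidableEq α]

theorem exists_fin_split_card_le (S : Finset α) {t s : ℕ} (h : #S ≤ t * s) :
    ∃ f : Fin t → Finset α, Pairwise (Disjoint on f) ∧ univ.sup f = S ∧ ∀ q, #(f q) ≤ s := by
  induction t generalizing S with
  | zero => exact ⟨Fin.elim0, fun i => i.elim0, by simpa [eq_comm] using h, fun i => i.elim0⟩
  | succ t ih =>
    obtain ⟨T, hTS, hT⟩ := exists_subset_card_eq (min_le_right s #S)
    obtain ⟨f, hf, hfS, hfs⟩ := ih (S \ T) (by
      rw [Nat.succ_mul] at h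
      rw [card_sdiff_of_subset hTS]
      omega)
    have hTf : ∀ q, Disjoint T (f q) := fun q =>
      disjoint_sdiff.mono_right (hfS ▸ le_sup (mem_univ q))
    refine ⟨Fin.cons T f, pairwise_disjoint_fin_cons hTf hf, ?_,
      Fin.cases (by simp [hT]) (by simpa using hfs)⟩
    rw [Fin.univ_succ, sup_cons, sup_map]
    simp [hfS, hTS]

theorem card_sup_of_pairwise_disjoint {ι : Type*} [Fintype ι] {Y : ι → Finset α}
    (hY : Pairwise (Disjoint on Y)) : #(univ.sup Y) = ∑ i, #(Y i) := by
  rw [sup_eq_biUnion, card_biUnion (hY.set_pairwise _)]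

theorem exists_refinement_card_le {ι κ : Type*} [Fintype ι] [Nonempty ι] [Fintype κ]
    {Y : ι → Finset α} (hY : Pairwise (Disjoint on Y)) {s K : ℕ} (hYK : #(univ.sup Y) ≤ s * K)
    (hκ : Fintype.card ι + K ≤ Fintype.card κ) :
    ∃ X : κ → Finset α, Pairwise (Disjoint on X) ∧ univ.sup X = univ.sup Y ∧
      (∀ j, #(X j) ≤ s) ∧ ∀ j, ∃ i, X j ⊆ Y i := by
  set t : ι → ℕ := fun i => #(Y i) / s + 1
  have hYt : ∀ i, #(Y i) ≤ t i * s := by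
    intro i
    rcases s.eq_zero_or_pos with rfl | hs
    · simpa using card_le_card (le_sup (f := Y) (mem_univ i)) |>.trans hYK
    · simpa [t, add_mul] using (Nat.lt_div_mul_add hs).le
  have ht : ∑ i, t i ≤ Fintype.card κ :=
    calc ∑ i, t i = ∑ i, #(Y i) / s + Fintype.card ι := by simp [t, sum_add_distrib]
      _ ≤ (∑ i, #(Y i)) / s + Fintype.card ι := by gcongr; exact sum_nat_div_le _ _ _
      _ ≤ K + Fintype.card ι := by
        gcongr
        rw [← card_sup_of_pairwise_disjoint hY]
        exact Nat.div_le_of_le_mul hYK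
      _ ≤ Fintype.card κ := by omega
  choose f hf hfY hfs using fun i => exists_fin_split_card_le (Y i) (hYt i)
  have hfY' : ∀ i q, f i q ⊆ Y i := fun i q => hfY i ▸ le_sup (mem_univ q)
  obtain ⟨e⟩ : Nonempty ((Σ i, Fin (t i)) ↪ κ) :=
    Embedding.nonempty_of_card_le (by simpa [Fintype.card_sigma] using ht)
  refine ⟨extend e (fun x => f x.1 x.2) ⊥,
    pairwise_disjoint_extend_bot e.injective (pairwise_disjoint_sigma hY hf hfY'), ?_,
    forall_extend_bot (P := fun X => #X ≤ s) e _ (by simp) (fun x => hfs _ _),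
    forall_extend_bot (P := fun X => ∃ i, X ⊆ Y i) e _ ⟨Classical.arbitrary ι, empty_subset _⟩
      (fun x => ⟨x.1, hfY' _ _⟩)⟩
  rw [sup_extend_bot e.injective, ← univ_sigma_univ, sup_sigma]
  simp [hfY]

end Refinement

/-- Let `c` be monotone subadditive with `c ∅ = 0`, `|J| = n`, `m ≥ 2`,
`k = m + ⌈√(mn)⌉`.  If `(X₁, …, X_k)` is a `k`-partition of `J` minimizing
`max_{i∈[k]} c(Xᵢ)` subject to `|Xᵢ| ≤ ⌈√(n/m)⌉` for all `i`, then
`max_{i∈[k]} c(Xᵢ) ≤ OPT`, where `OPT` is the makespan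
`max_i (c(Xᵢ*) + p(Xᵢ*))` of any `m`-partition `(X₁*, …, X_m*)` of `J`. -/
theorem stmt6 {α : Type*} [DecidableEq α] (J : Finset α) (n m : ℕ)
    (hn : J.card = n) (hm : 2 ≤ m)
    (c : Finset α → NNReal) (p : α → NNReal)
    (hmono : ∀ X Y : Finset α, X ⊆ Y → c X ≤ c Y)
    (X : Fin (m + ⌈Real.sqrt ((m : ℝ) * n)⌉₊) → Finset α)
    (hminX : ∀ X' : Fin (m + ⌈Real.sqrt ((m : ℝ) * n)⌉₊) → Finset α,
      (∀ i j, i ≠ j → Disjoint (X' i) (X' j)) → Finset.univ.sup X' = J →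
      (∀ i, (X' i).card ≤ ⌈Real.sqrt ((n : ℝ) / m)⌉₊) →
      Finset.univ.sup' ⟨⟨0, by omega⟩, Finset.mem_univ _⟩ (fun i => c (X i)) ≤
        Finset.univ.sup' ⟨⟨0, by omega⟩, Finset.mem_univ _⟩ (fun i => c (X' i))) :
    ∀ Xstar : Fin m → Finset α,
      (∀ i j, i ≠ j → Disjoint (Xstar i) (Xstar j)) →
      Finset.univ.sup Xstar = J →
      Finset.univ.sup' ⟨⟨0, by omega⟩, Finset.mem_univ _⟩ (fun i => c (X i)) ≤
        Finset.univ.sup' ⟨⟨0, by omega⟩, Finset.mem_univ _⟩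
          (fun i => c (Xstar i) + ∑ j ∈ Xstar i, p j) := by
  intro Xstar hdisj hcover
  have : Nonempty (Fin m) := ⟨⟨0, by omega⟩⟩
  obtain ⟨X', hdisj', hcover', hsize', hrefines⟩ :=
    exists_refinement_card_le (κ := Fin (m + ⌈√((m : ℝ) * n)⌉₊)) hdisj
      (by rw [hcover, hn]; exact le_ceil_sqrt_div_mul_ceil_sqrt_mul n m (by omega))
      (by simp)
  refine (hminX X' hdisj' (hcover'.trans hcover) hsize').trans (sup'_le _ _ fun j _ => ?_)
  obtain ⟨i, hi⟩ := hrefines j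
  calc c (X' j) ≤ c (Xstar i) := hmono _ _ hi
    _ ≤ c (Xstar i) + ∑ j ∈ Xstar i, p j := le_self_add
    _ ≤ _ := le_sup' (fun i => c (Xstar i) + ∑ j ∈ Xstar i, p j) (mem_univ i)
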